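/- arXiv:2105.05513 — 2 statements merged into one kernel-verified Lean document; each statement's English description precedes it below -/
import Mathlib

section
/- The number of excursion-type leaf-marked forests of d d-ary trees with n internal nodes and d-1 marked leaves in total equals (1/d) times the total number of such leaf-marked forests. -/
/-- A `d`-ary tree: a finite prefix-closed set of words over `Fin d` containing
the empty word, where every node has either all `d` children or none. -/
structure DaryTree (d : ℕ) where
  words : Finset (List (Fin d))
  nil_mem : [] ∈ words
  prefix_closed : ∀ u v : List (Fin d), u ∈ words → v <+: u → v ∈ words
  complete : ∀ (u : List (Fin d)) (j : Fin d), u ++ [j] ∈ words → ∀ k : Fin d, u ++ [k] ∈ words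

/-- `u` is a leaf of `T`: a node with no children. -/
def isLeaf {d : ℕ} (T : DaryTree d) (u : List (Fin d)) : Prop :=
  u ∈ T.words ∧ ∀ j : Fin d, u ++ [j] ∉ T.words

/-- `u` is an internal node of `T`: a node with children. -/
def isInternal {d : ℕ} (T : DaryTree d) (u : List (Fin d)) : Prop :=
  u ∈ T.words ∧ ∃ j : Fin d, u ++ [j] ∈ T.words

/-- The number of internal nodes of `T`. -/
noncomputable def internalCount {d : ℕ} (T : DaryTree d) : ℕ :=
  Nat.card {u : List (Fin d) // isInternal T u}

/-- The number of leaves of `T`. -/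
noncomputable def leafCount {d : ℕ} (T : DaryTree d) : ℕ :=
  Nat.card {u : List (Fin d) // isLeaf T u}

/-!
Rotating a forest cyclically preserves everything except the excursion condition, and the
cycle lemma says that exactly one of the `d` rotations of a step sequence `x : Fin d → ℤ` with
total sum `-1` is an excursion: the one starting where the prefix sums first attain their
minimum. Rotations therefore pair `Fin d × (excursion-type forests)` bijectively with all forests.
-/

open Finset

theorem Function.Periodic.sum_range_add_period {M : Type*} [AddCommMonoid M] {b : ℕ → M}
    {d : ℕ} (hb : Function.Periodic b d) (m : ℕ) :
    ∑ i ∈ range (m + d), b i = ∑ i ∈ range m, b i + ∑ i ∈ range d, b i := by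
  induction m with
  | zero => simp
  | succ m ih =>
    rw [Nat.add_right_comm, sum_range_succ, ih, hb m, sum_range_succ, add_right_comm]

theorem existsUnique_lt_forall_sum_range_le {b : ℕ → ℤ} {d : ℕ} (hd : 0 < d)
    (hb : Function.Periodic b d) (hsum : ∑ i ∈ range d, b i = -1) :
    ∃! k, k < d ∧ ∀ m < d, ∑ i ∈ range k, b i ≤ ∑ i ∈ range (k + m), b i := by
  set S : ℕ → ℤ := fun m => ∑ i ∈ range m, b i
  have hdrop : ∀ m, S (m + d) = S m - 1 := fun m => by
    simp only [S, hb.sum_range_add_period, hsum, ← sub_eq_add_neg]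
  have hmin : ∃ k, k < d ∧ ∀ j < d, S k ≤ S j := by
    obtain ⟨k, hk, hk_min⟩ := exists_min_image (range d) S ⟨0, mem_range.2 hd⟩
    exact ⟨k, mem_range.1 hk, fun j hj => hk_min j (mem_range.2 hj)⟩
  classical
  set k := Nat.find hmin
  obtain ⟨hkd, hk_min⟩ : k < d ∧ ∀ j < d, S k ≤ S j := Nat.find_spec hmin
  have hk_first : ∀ j < k, S k < S j := fun j hj => by
    by_contra! hle
    exact Nat.find_min hmin hj ⟨hj.trans hkd, fun j' hj' => hle.trans (hk_min j' hj')⟩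
  have hk_good : ∀ m < d, S k ≤ S (k + m) := fun m hm => by
    rcases lt_or_ge (k + m) d with h | h
    · exact hk_min _ h
    · obtain ⟨j, hj⟩ := Nat.exists_eq_add_of_le h
      have := hk_first j (by omega)
      rw [show k + m = j + d by omega, hdrop]
      omega
  -- of two good starting points `t₁ < t₂`, the first forces `S t₁ ≤ S t₂`,
  -- the second `S t₂ ≤ S (t₁ + d) = S t₁ - 1`
  have not_two_good : ∀ t₁ t₂, t₁ < t₂ → t₂ < d →
      (∀ m < d, S t₁ ≤ S (t₁ + m)) → ¬ ∀ m < d, S t₂ ≤ S (t₂ + m) := by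
    intro t₁ t₂ h₁₂ h₂ H₁ H₂
    have h₁ := H₁ (t₂ - t₁) (by omega)
    have h₂' := H₂ (t₁ + d - t₂) (by omega)
    rw [Nat.add_sub_cancel' h₁₂.le] at h₁
    rw [show t₂ + (t₁ + d - t₂) = t₁ + d by omega, hdrop] at h₂'
    omega
  refine ⟨k, ⟨hkd, hk_good⟩, fun t ⟨htd, ht⟩ => ?_⟩
  rcases lt_trichotomy t k with h | h | h
  · exact (not_two_good t k h hkd ht hk_good).elim
  · exact h
  · exact (not_two_good k t h htd hk_good ht).elim

/-- For the forest's sequence `x j = |ℓ⁽ʲ⁾| - 1` the prefix sums below are the leaf sequence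
`s₀, …, s_{d-1}`. -/
def IsExcursion {d : ℕ} (x : Fin d → ℤ) : Prop :=
  ∀ k : ℕ, k < d → 0 ≤ ∑ j ∈ univ.filter (fun j : Fin d => j.1 < k), x j

section Rotation

variable {d : ℕ} [NeZero d]

theorem sum_filter_val_lt_eq_sum_range (x : Fin d → ℤ) {m : ℕ} (hm : m ≤ d) :
    ∑ j ∈ univ.filter (fun j : Fin d => j.1 < m), x j = ∑ i ∈ range m, x (Fin.ofNat d i) :=
  sum_nbij' Fin.val (Fin.ofNat d) (by simp) (fun i hi => by
      have hi := mem_range.1 hi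
      simp [Nat.mod_eq_of_lt (hi.trans_le hm), hi])
    (by simp) (fun i hi => by simp [Nat.mod_eq_of_lt ((mem_range.1 hi).trans_le hm)]) (by simp)

theorem isExcursion_rotate_iff (x : Fin d → ℤ) (k : Fin d) :
    IsExcursion (fun i => x (i + k)) ↔
      ∀ m < d, ∑ i ∈ range k, x (Fin.ofNat d i) ≤ ∑ i ∈ range (k + m), x (Fin.ofNat d i) := by
  have hprefix : ∀ m ≤ d, ∑ j ∈ univ.filter (fun j : Fin d => j.1 < m), x (j + k) =
      ∑ i ∈ range (k + m), x (Fin.ofNat d i) - ∑ i ∈ range k, x (Fin.ofNat d i) := by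
    intro m hm
    rw [sum_filter_val_lt_eq_sum_range _ hm, sum_range_add, add_sub_cancel_left]
    refine sum_congr rfl fun i _ => congrArg x (Fin.ext ?_)
    simp [Fin.val_add, Nat.add_mod, add_comm]
  refine forall₂_congr fun m hm => ?_
  rw [hprefix m hm.le, sub_nonneg]

/-- The cycle lemma of Dvoretzky and Motzkin. -/
theorem existsUnique_isExcursion_rotate (x : Fin d → ℤ) (hx : ∑ i, x i = -1) :
    ∃! k : Fin d, IsExcursion (fun i => x (i + k)) := by
  have hperiodic : Function.Periodic (fun i => x (Fin.ofNat d i)) d := fun i =>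
    congrArg x (Fin.ext (by simp))
  have hsum : ∑ i ∈ range d, x (Fin.ofNat d i) = -1 := by
    rw [← Fin.sum_univ_eq_sum_range (fun i => x (Fin.ofNat d i))]
    simpa using hx
  obtain ⟨k, ⟨hkd, hk⟩, hk_unique⟩ :=
    existsUnique_lt_forall_sum_range_le (Nat.pos_of_neZero d) hperiodic hsum
  refine ⟨⟨k, hkd⟩, (isExcursion_rotate_iff x _).2 hk, fun t ht => Fin.ext ?_⟩
  exact hk_unique t ⟨t.2, (isExcursion_rotate_iff x t).1 ht⟩

theorem card_mul_card_isExcursion {α : Type*} (P : (Fin d → α) → Prop) (w : α → ℤ)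
    (hP : ∀ g k, P g → P (fun i => g (i + k))) (hw : ∀ g, P g → ∑ i, w (g i) = -1) :
    d * Nat.card {g // P g ∧ IsExcursion (fun i => w (g i))} = Nat.card {g // P g} := by
  let rotate : Fin d × {g // P g ∧ IsExcursion (fun i => w (g i))} → {g // P g} :=
    fun p => ⟨fun i => p.2.1 (i + p.1), hP _ _ p.2.2.1⟩
  have hrotate : Function.Bijective rotate := by
    constructor
    · rintro ⟨k₁, g₁, hP₁, hg₁⟩ ⟨k₂, g₂, _, hg₂⟩ h
      have hrot : (fun i => g₁ (i + k₁)) = fun i => g₂ (i + k₂) := congrArg Subtype.val h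
      set f := fun i => g₁ (i + k₁)
      have hg₁f : g₁ = fun i => f (i + -k₁) := by simp [f]
      have hg₂f : g₂ = fun i => f (i + -k₂) := by simp [hrot]
      obtain ⟨k, -, hk_unique⟩ := existsUnique_isExcursion_rotate _ (hw f (hP _ _ hP₁))
      obtain rfl : k₁ = k₂ := neg_injective <|
        (hk_unique _ (by rwa [hg₁f] at hg₁)).trans (hk_unique _ (by rwa [hg₂f] at hg₂)).symm
      obtain rfl : g₁ = g₂ := hg₁f.trans hg₂f.symm
      rfl
    · rintro ⟨h, hh⟩
      obtain ⟨k, hk, -⟩ := existsUnique_isExcursion_rotate _ (hw h hh)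
      exact ⟨(-k, ⟨fun i => h (i + k), hP h k hh, hk⟩), Subtype.ext (funext fun i => by
        simp [rotate])⟩
  rw [← Nat.card_eq_of_bijective rotate hrotate, Nat.card_prod, Nat.card_fin]

end Rotation

/-- `d` times the number of excursion-type leaf-marked forests (of `d` `d`-ary trees with
`n` internal nodes and `d-1` marked leaves in total) equals the total number of such
leaf-marked forests. -/
theorem statement11 (n d : ℕ) (hd : 2 ≤ d) :
    d * Nat.card {g : Fin d → DaryTree d × Finset (List (Fin d)) //
        (∑ i, internalCount (g i).1) = n ∧
        (∀ i, ∀ u ∈ (g i).2, isLeaf (g i).1 u) ∧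
        (∑ i, (g i).2.card) = d - 1 ∧
        ∀ k : ℕ, k < d →
          0 ≤ ∑ j ∈ Finset.univ.filter (fun j : Fin d => j.1 < k),
                (((g j).2.card : ℤ) - 1)} =
      Nat.card {g : Fin d → DaryTree d × Finset (List (Fin d)) //
        (∑ i, internalCount (g i).1) = n ∧
        (∀ i, ∀ u ∈ (g i).2, isLeaf (g i).1 u) ∧
        (∑ i, (g i).2.card) = d - 1} := by
  have : NeZero d := ⟨by omega⟩
  have hcount := card_mul_card_isExcursion
    (fun g : Fin d → DaryTree d × Finset (List (Fin d)) =>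
      (∑ i, internalCount (g i).1) = n ∧ (∀ i, ∀ u ∈ (g i).2, isLeaf (g i).1 u) ∧
        (∑ i, (g i).2.card) = d - 1)
    (fun p => (p.2.card : ℤ) - 1) ?rotation_invariant ?sum_eq_neg_one
  · simpa only [and_assoc, IsExcursion] using hcount
  case rotation_invariant =>
    rintro g k ⟨hint, hleaf, hmarks⟩
    refine ⟨?_, fun i => hleaf (i + k), ?_⟩
    · rw [← hint]; exact Equiv.sum_comp (Equiv.addRight k) (fun i => internalCount (g i).1)
    · rw [← hmarks]; exact Equiv.sum_comp (Equiv.addRight k) (fun i => (g i).2.card)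
  case sum_eq_neg_one =>
    rintro g ⟨-, -, hmarks⟩
    rw [sum_sub_distrib, ← Nat.cast_sum, hmarks]
    simp only [sum_const, card_univ, Fintype.card_fin, nsmul_eq_mul, mul_one]
    omega
end

section
/- For d ≥ 2 and n ≥ 0, the number of d-ary trees with n internal nodes carrying d-1 marks on edges-or-buds, times d, equals the number of d-ary trees with n+1 internal nodes carrying d-1 marked leaves: d · C(dn+d-1, d-1) · a(n,d) = C((d-1)(n+1)+1, d-1) · a(n+1,d), and hence there exists a bijection between the set EA(n,d) × {1,...,d} and the set LA(n+1,d,d-1). -/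
/-- `a n d = C(dn+1, n) / (dn+1)`, the number of `d`-ary trees with `n` internal nodes. -/
def a (n d : ℕ) : ℕ := (d * n + 1).choose n / (d * n + 1)

/-- Edge-marked trees: a `d`-ary tree with `n` internal nodes together with `d-1` marks
distributed among its edges (identified with their non-root endpoints) and the `d-1` buds. -/
def EAType (n d : ℕ) :=
  {p : DaryTree d × Finset (List (Fin d) ⊕ Fin (d - 1)) //
    (∀ x ∈ p.2, ∀ u : List (Fin d), x = Sum.inl u → u ∈ p.1.words ∧ u ≠ []) ∧
    internalCount p.1 = n ∧ p.2.card = d - 1}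

/-- Leaf-marked trees: a `d`-ary tree with `n` internal nodes together with a set
of `m` distinguished leaves. -/
def LAType (n d m : ℕ) :=
  {p : DaryTree d × Finset (List (Fin d)) //
    internalCount p.1 = n ∧ (∀ u ∈ p.2, isLeaf p.1 u) ∧ p.2.card = m}

namespace DaryTree

variable {d : ℕ}

lemma ext_words {T₁ T₂ : DaryTree d} (h : T₁.words = T₂.words) : T₁ = T₂ := by
  cases T₁; cases T₂; congr

def internalFinset (T : DaryTree d) : Finset (List (Fin d)) :=
  T.words.filter fun u => ∃ j, u ++ [j] ∈ T.words

def leafFinset (T : DaryTree d) : Finset (List (Fin d)) :=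
  T.words.filter fun u => ∀ j, u ++ [j] ∉ T.words

lemma mem_internalFinset {T : DaryTree d} {u : List (Fin d)} :
    u ∈ T.internalFinset ↔ isInternal T u := by
  simp [internalFinset, isInternal]

lemma mem_leafFinset {T : DaryTree d} {u : List (Fin d)} :
    u ∈ T.leafFinset ↔ isLeaf T u := by
  simp [leafFinset, isLeaf]

lemma internalCount_eq_card (T : DaryTree d) : internalCount T = T.internalFinset.card := by
  rw [internalCount, ← Nat.card_eq_finsetCard]
  exact Nat.card_congr (Equiv.subtypeEquivRight fun _ => mem_internalFinset.symm)

lemma words_erase_nil (T : DaryTree d) :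
    T.words.erase [] = (T.internalFinset ×ˢ Finset.univ).image fun p => p.1 ++ [p.2] := by
  ext u
  simp only [Finset.mem_erase, Finset.mem_image, Finset.mem_product, Finset.mem_univ, and_true,
    mem_internalFinset, isInternal, Prod.exists]
  constructor
  · rintro ⟨hne, hu⟩
    obtain ⟨v, j, rfl⟩ := (List.eq_nil_or_concat' u).resolve_left hne
    exact ⟨v, j, ⟨T.prefix_closed _ _ hu ⟨[j], rfl⟩, j, hu⟩, rfl⟩
  · rintro ⟨v, j, ⟨-, k, hk⟩, rfl⟩
    exact ⟨by simp, T.complete v k hk j⟩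

lemma card_words (T : DaryTree d) : T.words.card = d * internalCount T + 1 := by
  have hinj : Function.Injective fun p : List (Fin d) × Fin d => p.1 ++ [p.2] := by
    rintro ⟨u, j⟩ ⟨v, k⟩ h
    obtain ⟨rfl, h⟩ := List.append_inj h (by simpa using congrArg List.length h)
    simp_all
  rw [← Finset.card_erase_add_one T.nil_mem, words_erase_nil,
    Finset.card_image_of_injective _ hinj, Finset.card_product, internalCount_eq_card,
    Finset.card_univ, Fintype.card_fin, Nat.mul_comm]

lemma card_leafFinset (hd : 0 < d) (T : DaryTree d) :
    T.leafFinset.card = (d - 1) * internalCount T + 1 := by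
  have hsplit := T.words.card_filter_add_card_filter_not fun u => ∃ j, u ++ [j] ∈ T.words
  simp only [not_exists] at hsplit
  rw [← internalFinset, ← leafFinset, ← internalCount_eq_card, card_words] at hsplit
  obtain ⟨e, rfl⟩ : ∃ e, d = e + 1 := ⟨d - 1, by omega⟩
  rw [Nat.add_sub_cancel]
  linarith

def markSlots (T : DaryTree d) : Finset (List (Fin d) ⊕ Fin (d - 1)) :=
  (T.words.erase []).disjSum Finset.univ

lemma card_markSlots (T : DaryTree d) : T.markSlots.card = d * internalCount T + (d - 1) := by
  rw [markSlots, Finset.card_disjSum, Finset.card_univ, Fintype.card_fin, Finset.card_erase_of_mem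
    T.nil_mem, card_words, Nat.add_sub_cancel]

noncomputable def child (T : DaryTree d) {j₀ : Fin d} (h : [j₀] ∈ T.words) (j : Fin d) :
    DaryTree d where
  words := T.words.preimage (List.cons j) List.cons_injective.injOn
  nil_mem := Finset.mem_preimage.2 (T.complete [] j₀ h j)
  prefix_closed _ _ hu hv := Finset.mem_preimage.2 <|
    T.prefix_closed _ _ (Finset.mem_preimage.1 hu) (List.cons_prefix_cons.2 ⟨rfl, hv⟩)
  complete u k hu k' :=
    Finset.mem_preimage.2 (T.complete (j :: u) k (Finset.mem_preimage.1 hu :) k')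

lemma mem_child_words {T : DaryTree d} {j₀ : Fin d} (h : [j₀] ∈ T.words) {j : Fin d}
    {v : List (Fin d)} : v ∈ (T.child h j).words ↔ j :: v ∈ T.words := by
  simp [child]

lemma card_child_words_lt (T : DaryTree d) {j₀ : Fin d} (h : [j₀] ∈ T.words) (j : Fin d) :
    (T.child h j).words.card < T.words.card := by
  calc (T.child h j).words.card
      = ((T.child h j).words.image (List.cons j)).card :=
        (Finset.card_image_of_injective _ List.cons_injective).symm
    _ ≤ (T.words.erase []).card := Finset.card_le_card fun u hu => by
        obtain ⟨v, hv, rfl⟩ := Finset.mem_image.1 hu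
        exact Finset.mem_erase.2 ⟨List.cons_ne_nil _ _, mem_child_words h |>.1 hv⟩
    _ < T.words.card := Finset.card_erase_lt_of_mem T.nil_mem

end DaryTree

inductive DTree (d : ℕ) : Type
  | leaf : DTree d
  | node (children : Fin d → DTree d) : DTree d

namespace DTree

variable {d : ℕ}

def internalCount : DTree d → ℕ
  | leaf => 0
  | node f => 1 + ∑ j, (f j).internalCount

def words : DTree d → Finset (List (Fin d))
  | leaf => {[]}
  | node f => insert [] (Finset.univ.biUnion fun j => (f j).words.image (List.cons j))

@[simp] lemma mem_words_leaf {u : List (Fin d)} : u ∈ (leaf : DTree d).words ↔ u = [] := by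
  simp [words]

@[simp] lemma nil_mem_words (t : DTree d) : [] ∈ t.words := by
  cases t <;> simp [words]

@[simp] lemma cons_mem_words_node {f : Fin d → DTree d} {j : Fin d} {v : List (Fin d)} :
    j :: v ∈ (node f).words ↔ v ∈ (f j).words := by
  simp [words]

lemma card_words (t : DTree d) : t.words.card = d * t.internalCount + 1 := by
  induction t with
  | leaf => simp [words, internalCount]
  | node f ih =>
    have hdisj : ((Finset.univ : Finset (Fin d)) : Set (Fin d)).PairwiseDisjoint
        fun j => (f j).words.image (List.cons j) := by
      intro i _ j _ hij
      simp only [Function.onFun, Finset.disjoint_left, Finset.mem_image]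
      rintro _ ⟨u, -, rfl⟩ ⟨v, -, h⟩
      exact hij (List.cons.inj h).1.symm
    rw [words, Finset.card_insert_of_notMem (by simp), Finset.card_biUnion hdisj]
    simp only [Finset.card_image_of_injective _ List.cons_injective, ih, internalCount,
      Finset.sum_add_distrib, ← Finset.mul_sum, Finset.sum_const, Finset.card_univ,
      Fintype.card_fin, smul_eq_mul]
    ring

lemma words_prefix_closed (t : DTree d) (u v : List (Fin d)) (hu : u ∈ t.words) (hv : v <+: u) :
    v ∈ t.words := by
  induction t generalizing u v with
  | leaf => simp_all
  | node f ih =>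
    obtain _ | ⟨j, v⟩ := v
    · simp
    · obtain ⟨w, rfl⟩ := hv
      rw [List.cons_append, cons_mem_words_node] at hu
      exact cons_mem_words_node.2 (ih j _ _ hu ⟨w, rfl⟩)

lemma words_complete (t : DTree d) (u : List (Fin d)) (j : Fin d) (hu : u ++ [j] ∈ t.words)
    (k : Fin d) : u ++ [k] ∈ t.words := by
  induction t generalizing u with
  | leaf => simp at hu
  | node f ih =>
    obtain _ | ⟨i, u⟩ := u
    · simp
    · rw [List.cons_append, cons_mem_words_node] at hu ⊢
      exact ih i u hu

def toDaryTree (t : DTree d) : DaryTree d :=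
  ⟨t.words, t.nil_mem_words, t.words_prefix_closed, t.words_complete⟩

lemma internalCount_toDaryTree (hd : 0 < d) (t : DTree d) :
    _root_.internalCount t.toDaryTree = t.internalCount := by
  have h := t.toDaryTree.card_words
  rw [show t.toDaryTree.words = t.words from rfl, card_words] at h
  exact (Nat.eq_of_mul_eq_mul_left hd (Nat.add_right_cancel h)).symm

lemma words_injective (hd : 0 < d) : Function.Injective (words : DTree d → _) := by
  have hleaf (f : Fin d → DTree d) : (node f).words ≠ leaf.words := fun h => by
    have := cons_mem_words_node.2 (nil_mem_words (f ⟨0, hd⟩))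
    simp [h] at this
  intro t₁ t₂ h
  induction t₁ generalizing t₂ with
  | leaf => cases t₂ with
    | leaf => rfl
    | node g => exact absurd h.symm (hleaf g)
  | node f ih => cases t₂ with
    | leaf => exact absurd h (hleaf f)
    | node g =>
      refine congrArg node (funext fun j => ih j (Finset.ext fun v => ?_))
      rw [← cons_mem_words_node, h, cons_mem_words_node]

lemma exists_words_eq (T : DaryTree d) : ∃ t : DTree d, t.words = T.words := by
  induction hN : T.words.card using Nat.strong_induction_on generalizing T with
  | _ N ih =>
  by_cases hroot : ∃ j₀ : Fin d, [j₀] ∈ T.words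
  · obtain ⟨j₀, hj₀⟩ := hroot
    choose f hf using fun j => ih _ (hN ▸ T.card_child_words_lt hj₀ j) (T.child hj₀ j) rfl
    refine ⟨.node f, Finset.ext fun u => ?_⟩
    obtain _ | ⟨j, v⟩ := u
    · simp [T.nil_mem]
    · rw [cons_mem_words_node, hf, DaryTree.mem_child_words]
  · refine ⟨.leaf, Finset.ext fun u => ?_⟩
    obtain _ | ⟨j, v⟩ := u
    · simp [T.nil_mem]
    · simp only [mem_words_leaf, reduceCtorEq, false_iff]
      exact fun hu => hroot ⟨j, T.prefix_closed _ [j] hu ⟨v, rfl⟩⟩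

noncomputable def equivDaryTree (hd : 0 < d) (n : ℕ) :
    {t : DTree d // t.internalCount = n} ≃ {T : DaryTree d // _root_.internalCount T = n} :=
  Equiv.ofBijective (fun t => ⟨t.1.toDaryTree, by rw [internalCount_toDaryTree hd, t.2]⟩)
    ⟨fun t₁ t₂ h => Subtype.ext <| words_injective hd (congrArg (·.1.words) h), fun T => by
      obtain ⟨t, ht⟩ := exists_words_eq T.1
      have hT : t.toDaryTree = T.1 := DaryTree.ext_words ht
      exact ⟨⟨t, by rw [← internalCount_toDaryTree hd, hT, T.2]⟩, Subtype.ext hT⟩⟩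

def forestInternalCount (L : List (DTree d)) : ℕ := (L.map internalCount).sum

@[simp] lemma forestInternalCount_nil : forestInternalCount ([] : List (DTree d)) = 0 := rfl

@[simp] lemma forestInternalCount_cons (t : DTree d) (L : List (DTree d)) :
    forestInternalCount (t :: L) = t.internalCount + forestInternalCount L := rfl

@[simp] lemma forestInternalCount_append (L M : List (DTree d)) :
    forestInternalCount (L ++ M) = forestInternalCount L + forestInternalCount M := by
  simp [forestInternalCount]

@[simp] lemma forestInternalCount_ofFn (f : Fin d → DTree d) :
    forestInternalCount (List.ofFn f) = ∑ j, (f j).internalCount := by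
  simp [forestInternalCount, List.sum_ofFn]

def graft (L : List (DTree d)) : List (DTree d) :=
  node (fun j => L.getD j leaf) :: L.drop d

lemma graft_ofFn_append (f : Fin d → DTree d) (L : List (DTree d)) :
    graft (List.ofFn f ++ L) = node f :: L := by
  simp only [graft, List.cons.injEq, node.injEq]
  refine ⟨funext fun j => ?_, by simp⟩
  rw [List.getD_append _ _ _ _ (by simp), List.getD_eq_getElem _ _ (by simp), List.getElem_ofFn]

lemma graft_injOn : Set.InjOn (graft (d := d)) {L | d ≤ L.length} := by
  intro L hL M hM h
  simp only [graft, List.cons.injEq, node.injEq, funext_iff] at h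
  refine List.ext_getElem? fun i => ?_
  rcases lt_or_ge i d with hi | hi
  · have := h.1 ⟨i, hi⟩
    rwa [List.getD_eq_getElem _ _ (by simp at hL; omega), List.getD_eq_getElem _ _ (by
      simp at hM; omega), ← Option.some_inj, ← List.getElem?_eq_getElem,
      ← List.getElem?_eq_getElem] at this
  · obtain ⟨k, rfl⟩ := Nat.exists_eq_add_of_le hi
    rw [← List.getElem?_drop, h.2, List.getElem?_drop]

end DTree

lemma choose_forest_identity (d n r : ℕ) :
    (d * (n + 1) + r + 1) * (r * (d * (n + 1) + r).choose (n + 1) +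
        (r + d) * (d * (n + 1) + r).choose n) =
      (d * (n + 1) + r) * ((r + 1) * (d * (n + 1) + r + 1).choose (n + 1)) := by
  have key := Nat.add_one_mul_choose_eq (d * (n + 1) + r) n
  rw [Nat.choose_succ_succ] at key ⊢
  zify at key ⊢
  linear_combination (d : ℤ) * key

namespace DTree

variable {d : ℕ}

open Classical

noncomputable def forests (d : ℕ) : ℕ → ℕ → Finset (List (DTree d))
  | 0, 0 => {[]}
  | 0, _ + 1 => ∅
  | r + 1, n => (forests d r n).image (List.cons leaf) ∪
      match n with
      | 0 => ∅
      | n + 1 => (forests d (r + d) n).image graft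
  termination_by r n => (n, r)

lemma forests_succ (r n : ℕ) :
    forests d (r + 1) (n + 1) =
      (forests d r (n + 1)).image (List.cons leaf) ∪ (forests d (r + d) n).image graft := by
  rw [forests]

lemma cons_node_mem_image_graft {s : Finset (List (DTree d))} (hs : ∀ M ∈ s, d ≤ M.length)
    {f : Fin d → DTree d} {L : List (DTree d)} :
    node f :: L ∈ s.image graft ↔ List.ofFn f ++ L ∈ s := by
  rw [Finset.mem_image, ← graft_ofFn_append]
  refine ⟨fun ⟨M, hM, h⟩ => ?_, fun h => ⟨_, h, rfl⟩⟩
  rwa [← graft_injOn (hs M hM) (by simp) h]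

theorem mem_forests : ∀ {r n : ℕ} {L : List (DTree d)},
    L ∈ forests d r n ↔ L.length = r ∧ forestInternalCount L = n
  | 0, 0, L => by
    rw [forests, Finset.mem_singleton, List.length_eq_zero_iff]
    exact ⟨fun h => ⟨h, h ▸ rfl⟩, And.left⟩
  | 0, n + 1, L => by
    rw [forests]
    simp only [Finset.notMem_empty, false_iff, not_and, List.length_eq_zero_iff]
    rintro rfl
    simp
  | r + 1, n, L => by
    rw [forests.eq_def]
    obtain _ | ⟨_ | f, L⟩ := L
    · cases n <;> simp [graft]
    · have := @mem_forests r n L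
      cases n <;> simp [graft, this, internalCount]
    · cases n with
      | zero => simp [internalCount]
      | succ m =>
        have hlen : ∀ M ∈ forests d (r + d) m, d ≤ M.length := fun M hM => by
          rw [(mem_forests.1 hM).1]; omega
        rw [Finset.mem_union, cons_node_mem_image_graft hlen, mem_forests]
        simp [internalCount]
        omega
  termination_by r n => (n, r)

lemma card_forests_zero : ∀ r, (forests d r 0).card = 1
  | 0 => by rw [forests]; rfl
  | r + 1 => by
    rw [forests, Finset.union_empty, Finset.card_image_of_injective _ List.cons_injective,
      card_forests_zero r]

lemma card_forests_succ_succ (r n : ℕ) :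
    (forests d (r + 1) (n + 1)).card =
      (forests d r (n + 1)).card + (forests d (r + d) n).card := by
  have hdisj : Disjoint ((forests d r (n + 1)).image (List.cons leaf))
      ((forests d (r + d) n).image graft) := by
    simp only [Finset.disjoint_left, Finset.mem_image]
    rintro _ ⟨L, -, rfl⟩ ⟨M, -, h⟩
    simp [graft] at h
  rw [forests_succ, Finset.card_union_of_disjoint hdisj,
    Finset.card_image_of_injective _ List.cons_injective,
    Finset.card_image_of_injOn fun L hL M hM => graft_injOn (by simp [(mem_forests.1 hL).1])
      (by simp [(mem_forests.1 hM).1])]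

theorem card_forests_mul (hd : 0 < d) : ∀ r n,
    (forests d r n).card * (d * n + r) = r * (d * n + r).choose n
  | 0, 0 => by simp
  | 0, n + 1 => by rw [forests]; simp
  | r + 1, 0 => by simp [card_forests_zero]
  | r + 1, n + 1 => by
    have hA := card_forests_mul hd r (n + 1)
    have hB := card_forests_mul hd (r + d) n
    rw [show d * n + (r + d) = d * (n + 1) + r by ring] at hB
    refine Nat.eq_of_mul_eq_mul_right (show 0 < d * (n + 1) + r by positivity) ?_
    calc (forests d (r + 1) (n + 1)).card * (d * (n + 1) + (r + 1)) * (d * (n + 1) + r)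
        = (d * (n + 1) + r + 1) * ((forests d r (n + 1)).card * (d * (n + 1) + r) +
            (forests d (r + d) n).card * (d * (n + 1) + r)) := by
          rw [card_forests_succ_succ]; ring
      _ = (d * (n + 1) + r) * ((r + 1) * (d * (n + 1) + r + 1).choose (n + 1)) := by
          rw [hA, hB, choose_forest_identity]
      _ = (r + 1) * (d * (n + 1) + (r + 1)).choose (n + 1) * (d * (n + 1) + r) := by
          rw [← add_assoc]; ring
  termination_by r n => (n, r)

noncomputable def equivForestsOne (n : ℕ) :
    {t : DTree d // t.internalCount = n} ≃ forests d 1 n :=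
  Equiv.ofBijective (fun t => ⟨[t.1], mem_forests.2 ⟨rfl, by simp [t.2]⟩⟩)
    ⟨fun t₁ t₂ h => Subtype.ext (List.singleton_inj.1 (congrArg Subtype.val h)), fun L => by
      obtain ⟨hlen, hcount⟩ := mem_forests.1 L.2
      obtain ⟨t, ht⟩ := List.length_eq_one_iff.1 hlen
      exact ⟨⟨t, by simpa [ht] using hcount⟩, Subtype.ext ht.symm⟩⟩

lemma card_forests_one (hd : 0 < d) (n : ℕ) : (forests d 1 n).card = a n d := by
  have h := card_forests_mul hd 1 n
  rw [one_mul] at h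
  exact (Nat.div_eq_of_eq_mul_left (Nat.succ_pos _) h.symm).symm

end DTree

lemma a_mul (n : ℕ) {d : ℕ} (hd : 0 < d) : a n d * (d * n + 1) = (d * n + 1).choose n := by
  simpa [DTree.card_forests_one hd] using DTree.card_forests_mul hd 1 n

noncomputable def DaryTree.equivFin {d : ℕ} (hd : 0 < d) (n : ℕ) :
    {T : DaryTree d // internalCount T = n} ≃ Fin (a n d) :=
  (DTree.equivDaryTree hd n).symm.trans <|
    (DTree.equivForestsOne n).trans (Finset.equivFinOfCardEq (DTree.card_forests_one hd n))

lemma cast_a (n : ℕ) {d : ℕ} (hd : 0 < d) :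
    (a n d : ℚ) = (d * n + 1).choose n / (d * n + 1 : ℕ) := by
  rw [← a_mul n hd, Nat.cast_mul, mul_div_cancel_right₀ _ (by positivity)]

theorem mul_choose_mul_a_eq (n : ℕ) {d : ℕ} (hd : 0 < d) :
    d * (d * n + d - 1).choose (d - 1) * a n d =
      ((d - 1) * (n + 1) + 1).choose (d - 1) * a (n + 1) d := by
  apply Nat.cast_injective (R := ℚ)
  push_cast
  rw [cast_a n hd, cast_a (n + 1) hd]
  obtain ⟨m, rfl⟩ : ∃ m, d = m + 1 := ⟨d - 1, by omega⟩
  rw [show (m + 1) * n + (m + 1) - 1 = (m + 1) * n + m by omega, Nat.add_sub_cancel,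
    show (m + 1) * (n + 1) + 1 = (m + 1) * n + m + 1 + 1 by ring,
    show m * (n + 1) + 1 = m * n + 1 + m by ring,
    Nat.cast_choose ℚ (by omega : m ≤ (m + 1) * n + m),
    Nat.cast_choose ℚ (by nlinarith : n ≤ (m + 1) * n + 1),
    Nat.cast_choose ℚ (by omega : m ≤ m * n + 1 + m),
    Nat.cast_choose ℚ (by nlinarith : n + 1 ≤ (m + 1) * n + m + 1 + 1),
    show (m + 1) * n + m - m = (m + 1) * n by omega,
    show (m + 1) * n + 1 - n = m * n + 1 by rw [Nat.add_one_mul]; omega,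
    show m * n + 1 + m - m = m * n + 1 by omega,
    show (m + 1) * n + m + 1 + 1 - (n + 1) = m * n + 1 + m by rw [Nat.add_one_mul]; omega]
  simp only [Nat.factorial_succ]
  push_cast
  field_simp
  ring

def Equiv.subtypeProdAndEquivSigma {X Y : Type*} (P : X → Prop) (Q : X → Y → Prop) :
    {p : X × Y // P p.1 ∧ Q p.1 p.2} ≃ Σ x : {x // P x}, {y // Q x y} where
  toFun p := ⟨⟨p.1.1, p.2.1⟩, ⟨p.1.2, p.2.2⟩⟩
  invFun q := ⟨(q.1.1, q.2.1), q.1.2, q.2.2⟩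
  left_inv _ := rfl
  right_inv _ := rfl

noncomputable def equivProdFinChoose {X β : Type*} (P : X → Prop) (S : X → Finset β) {k : ℕ}
    (hS : ∀ x, P x → (S x).card = k) (m : ℕ) :
    {p : X × Finset β // P p.1 ∧ p.2 ∈ (S p.1).powersetCard m} ≃ {x // P x} × Fin (k.choose m) :=
  (Equiv.subtypeProdAndEquivSigma P fun x M => M ∈ (S x).powersetCard m).trans <|
    (Equiv.sigmaCongrRight fun x => Finset.equivFinOfCardEq (by
      rw [Finset.card_powersetCard, hS x x.2])).trans (Equiv.sigmaEquivProd _ _)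

lemma eaType_iff {d n : ℕ} (p : DaryTree d × Finset (List (Fin d) ⊕ Fin (d - 1))) :
    ((∀ x ∈ p.2, ∀ u : List (Fin d), x = Sum.inl u → u ∈ p.1.words ∧ u ≠ []) ∧
      internalCount p.1 = n ∧ p.2.card = d - 1) ↔
    internalCount p.1 = n ∧ p.2 ∈ p.1.markSlots.powersetCard (d - 1) := by
  have hslots :
      (∀ x ∈ p.2, ∀ u, x = Sum.inl u → u ∈ p.1.words ∧ u ≠ []) ↔ p.2 ⊆ p.1.markSlots := by
    refine forall₂_congr fun x _ => ?_
    cases x <;> simp [DaryTree.markSlots, and_comm]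
  rw [Finset.mem_powersetCard, hslots]
  tauto

lemma laType_iff {d n m : ℕ} (p : DaryTree d × Finset (List (Fin d))) :
    (internalCount p.1 = n ∧ (∀ u ∈ p.2, isLeaf p.1 u) ∧ p.2.card = m) ↔
    internalCount p.1 = n ∧ p.2 ∈ p.1.leafFinset.powersetCard m := by
  simp only [Finset.mem_powersetCard, Finset.subset_iff, DaryTree.mem_leafFinset]

noncomputable def eaTypeEquiv (n d : ℕ) :
    EAType n d ≃
      {T : DaryTree d // internalCount T = n} × Fin ((d * n + (d - 1)).choose (d - 1)) :=
  (Equiv.subtypeEquivRight eaType_iff).trans <| equivProdFinChoose (internalCount · = n)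
    DaryTree.markSlots (fun T hT => by rw [T.card_markSlots, hT]) _

noncomputable def laTypeEquiv (n m : ℕ) {d : ℕ} (hd : 0 < d) :
    LAType n d m ≃ {T : DaryTree d // internalCount T = n} × Fin (((d - 1) * n + 1).choose m) :=
  (Equiv.subtypeEquivRight laType_iff).trans <| equivProdFinChoose (internalCount · = n)
    DaryTree.leafFinset (fun T hT => by rw [T.card_leafFinset hd, hT]) _

/-- `d · C(dn+d-1, d-1) · a(n,d) = C((d-1)(n+1)+1, d-1) · a(n+1,d)`, and there is a
bijection between `EA(n,d) × {1,...,d}` and `LA(n+1,d,d-1)`. -/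
theorem statement13 (n d : ℕ) (hd : 2 ≤ d) :
    d * (d * n + d - 1).choose (d - 1) * a n d =
      ((d - 1) * (n + 1) + 1).choose (d - 1) * a (n + 1) d ∧
    Nonempty ((EAType n d × Fin d) ≃ LAType (n + 1) d (d - 1)) := by
  have hd₀ : 0 < d := by omega
  have hcount := mul_choose_mul_a_eq n hd₀
  refine ⟨hcount, ⟨?_⟩⟩
  calc EAType n d × Fin d
      ≃ (Fin (a n d) × Fin ((d * n + (d - 1)).choose (d - 1))) × Fin d :=
        ((eaTypeEquiv n d).trans ((DaryTree.equivFin hd₀ n).prodCongr (.refl _))).prodCongr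
          (.refl _)
    _ ≃ Fin (a n d * (d * n + (d - 1)).choose (d - 1) * d) :=
        (finProdFinEquiv.prodCongr (.refl _)).trans finProdFinEquiv
    _ ≃ Fin (a (n + 1) d * ((d - 1) * (n + 1) + 1).choose (d - 1)) := finCongr <| by
        rw [show d * n + (d - 1) = d * n + d - 1 by omega, ← hcount.trans (mul_comm _ _)]
        ring
    _ ≃ {T : DaryTree d // internalCount T = n + 1} ×
          Fin (((d - 1) * (n + 1) + 1).choose (d - 1)) :=
        finProdFinEquiv.symm.trans ((DaryTree.equivFin hd₀ (n + 1)).symm.prodCongr (.refl _))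
    _ ≃ LAType (n + 1) d (d - 1) := (laTypeEquiv (n + 1) (d - 1) hd₀).symm
end
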